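/- Let F be a field with at least 4 elements. Then every nonscalar matrix in SL_2(F) is a product of at most two commutators of unipotent matrices of index 2. -/

import Mathlib

/-!
Every nonscalar `A ∈ SL₂(F)` is conjugate to the companion matrix `!![0, -1; 1, t]` of its
trace `t`, and being a commutator of U₂-matrices is invariant under conjugation. The commutator
of `!![1, s; 0, 1]` and `!![1, 0; 1, 1]` is nonscalar of trace `2 + s ^ 2`, so every nonscalar
matrix of determinant `1` and trace `2 + s ^ 2` with `s ≠ 0` is such a commutator. Finally,
`!![0, -1; 1, t]` is a product of two nonscalar determinant-one matrices of traces `β` and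
`a * (β + t - a) - 2`, and as soon as `F` has four elements one can choose `a, s, σ ≠ 0` making
these traces `2 + s ^ 2` and `2 + σ ^ 2`.
-/

open Matrix

variable {F : Type*} [Field F]

/-- A unipotent matrix of index 2: `A ≠ I` and `(A - I)² = 0`. -/
def IsU2 {m : Type*} [Fintype m] [DecidableEq m] (A : Matrix m m F) : Prop :=
  A ≠ 1 ∧ (A - 1) ^ 2 = 0

/-- A commutator `X * Y * X⁻¹ * Y⁻¹` of unipotent matrices of index 2. -/
def IsCommU2 {m : Type*} [Fintype m] [DecidableEq m] (A : Matrix m m F) : Prop :=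
  ∃ X Y : Matrix m m F, IsU2 X ∧ IsU2 Y ∧ A = X * Y * X⁻¹ * Y⁻¹

/-- `A` is a product of at most `k` commutators of unipotent matrices of index 2. -/
def IsProdCommU2 {m : Type*} [Fintype m] [DecidableEq m] (k : ℕ) (A : Matrix m m F) : Prop :=
  ∃ L : List (Matrix m m F), L.length ≤ k ∧ (∀ B ∈ L, IsCommU2 B) ∧ L.prod = A

/-- `A` is a product of at most `k` unipotent matrices of index 2. -/
def IsProdU2 {m : Type*} [Fintype m] [DecidableEq m] (k : ℕ) (A : Matrix m m F) : Prop :=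
  ∃ L : List (Matrix m m F), L.length ≤ k ∧ (∀ B ∈ L, IsU2 B) ∧ L.prod = A

section Conj

variable {m : Type*} [Fintype m] [DecidableEq m] {P : Matrix m m F}

lemma inv_eq_adjugate_of_det_eq_one {X : Matrix m m F} (h : X.det = 1) : X⁻¹ = X.adjugate := by
  rw [inv_def, h, Ring.inverse_one, one_smul]

lemma conj_mul_conj (hP : IsUnit P.det) (X Y : Matrix m m F) :
    P * X * P⁻¹ * (P * Y * P⁻¹) = P * (X * Y) * P⁻¹ := by
  simp only [mul_assoc, nonsing_inv_mul_cancel_left _ _ hP]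

lemma inv_conj (hP : IsUnit P.det) (X : Matrix m m F) :
    (P * X * P⁻¹)⁻¹ = P * X⁻¹ * P⁻¹ := by
  rw [Matrix.mul_inv_rev, Matrix.mul_inv_rev, nonsing_inv_nonsing_inv P hP, mul_assoc]

lemma inv_conj_conj (hP : IsUnit P.det) (X : Matrix m m F) :
    P⁻¹ * (P * X * P⁻¹) * P = X := by
  simp only [mul_assoc, nonsing_inv_mul_cancel_left _ _ hP, nonsing_inv_mul _ hP, mul_one]

lemma IsU2.conj {X : Matrix m m F} (hX : IsU2 X) (hP : IsUnit P.det) :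
    IsU2 (P * X * P⁻¹) := by
  have hsub : P * X * P⁻¹ - 1 = P * (X - 1) * P⁻¹ := by
    rw [mul_sub, sub_mul, mul_one, mul_nonsing_inv P hP]
  refine ⟨fun h => hX.1 ?_, ?_⟩
  · rw [← inv_conj_conj hP X, h, mul_one, nonsing_inv_mul P hP]
  · rw [hsub, sq, conj_mul_conj hP, ← sq, hX.2, mul_zero, zero_mul]

lemma IsCommU2.conj {A : Matrix m m F} (hA : IsCommU2 A) (hP : IsUnit P.det) :
    IsCommU2 (P * A * P⁻¹) := by
  obtain ⟨X, Y, hX, hY, rfl⟩ := hA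
  refine ⟨_, _, hX.conj hP, hY.conj hP, ?_⟩
  simp only [inv_conj hP, conj_mul_conj hP]

lemma isProdCommU2_two_mul {X Y : Matrix m m F} (hX : IsCommU2 X) (hY : IsCommU2 Y) :
    IsProdCommU2 2 (X * Y) :=
  ⟨[X, Y], le_rfl, by simp [hX, hY], by simp⟩

end Conj

section FinTwo

variable {A : Matrix (Fin 2) (Fin 2) F}

lemma exists_conj_companion_of_cyclic {p q : F}
    (h : p * (A 1 0 * p + A 1 1 * q) - (A 0 0 * p + A 0 1 * q) * q ≠ 0) :
    ∃ P : Matrix (Fin 2) (Fin 2) F,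
      IsUnit P.det ∧ A = P * !![0, -A.det; 1, A.trace] * P⁻¹ := by
  -- the columns of `P` are `v = ![p, q]` and `A *ᵥ v`, and `h` says `P.det ≠ 0`;
  -- `A * P = P * _` is then the Cayley–Hamilton identity `A ^ 2 = A.trace • A - A.det • 1`
  set P : Matrix (Fin 2) (Fin 2) F := !![p, A 0 0 * p + A 0 1 * q; q, A 1 0 * p + A 1 1 * q]
  have hP : IsUnit P.det := by
    rw [det_fin_two_of]
    exact h.isUnit
  refine ⟨P, hP, ?_⟩
  have hAP : A * P = P * !![0, -A.det; 1, A.trace] := by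
    ext i j
    fin_cases i <;> fin_cases j <;>
      simp [P, mul_apply, det_fin_two, trace_fin_two] <;> ring
  rw [← hAP, mul_assoc, mul_nonsing_inv P hP, mul_one]

lemma exists_cyclic_of_ne_smul_one (hA : ∀ c : F, A ≠ c • 1) :
    ∃ p q : F, p * (A 1 0 * p + A 1 1 * q) - (A 0 0 * p + A 0 1 * q) * q ≠ 0 := by
  by_cases h10 : A 1 0 = 0
  · by_cases h01 : A 0 1 = 0
    · refine ⟨1, 1, fun h => hA (A 0 0) ?_⟩
      have h11 : A 1 1 = A 0 0 := by linear_combination h + h01 - h10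
      ext i j
      fin_cases i <;> fin_cases j <;> simp [h10, h01, h11]
    · exact ⟨0, 1, by simpa using h01⟩
  · exact ⟨1, 0, by simpa using h10⟩

lemma exists_conj_companion (hA : ∀ c : F, A ≠ c • 1) :
    ∃ P : Matrix (Fin 2) (Fin 2) F,
      IsUnit P.det ∧ A = P * !![0, -A.det; 1, A.trace] * P⁻¹ :=
  have ⟨_, _, h⟩ := exists_cyclic_of_ne_smul_one hA
  exists_conj_companion_of_cyclic h

lemma exists_conj_of_trace_eq_of_det_eq {B : Matrix (Fin 2) (Fin 2) F}
    (hA : ∀ c : F, A ≠ c • 1) (hB : ∀ c : F, B ≠ c • 1) (htr : A.trace = B.trace)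
    (hdet : A.det = B.det) :
    ∃ P : Matrix (Fin 2) (Fin 2) F, IsUnit P.det ∧ A = P * B * P⁻¹ := by
  obtain ⟨P, hP, hPA⟩ := exists_conj_companion hA
  obtain ⟨Q, hQ, hQB⟩ := exists_conj_companion hB
  have hQinv : IsUnit (Q⁻¹).det := isUnit_nonsing_inv_det Q hQ
  refine ⟨P * Q⁻¹, by rw [det_mul]; exact hP.mul hQinv, ?_⟩
  rw [hPA, hQB, htr, hdet, Matrix.mul_inv_rev, nonsing_inv_nonsing_inv Q hQ]
  simp only [mul_assoc, nonsing_inv_mul_cancel_left _ _ hQ]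

lemma isU2_upper {s : F} (hs : s ≠ 0) : IsU2 !![1, s; 0, 1] := by
  refine ⟨fun h => hs (by simpa using congr_fun₂ h 0 1), ?_⟩
  rw [sq]
  ext i j
  fin_cases i <;> fin_cases j <;> simp [mul_apply, one_apply]

lemma isU2_lower {s : F} (hs : s ≠ 0) : IsU2 !![1, 0; s, 1] := by
  refine ⟨fun h => hs (by simpa using congr_fun₂ h 1 0), ?_⟩
  rw [sq]
  ext i j
  fin_cases i <;> fin_cases j <;> simp [mul_apply, one_apply]

lemma isCommU2_model {s : F} (hs : s ≠ 0) :
    IsCommU2 !![1 + s + s ^ 2, -s ^ 2; s, 1 - s] := by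
  refine ⟨_, _, isU2_upper hs, isU2_lower one_ne_zero, ?_⟩
  rw [inv_eq_adjugate_of_det_eq_one (by simp), inv_eq_adjugate_of_det_eq_one (by simp),
    adjugate_fin_two_of, adjugate_fin_two_of]
  ext i j
  fin_cases i <;> fin_cases j <;> simp <;> ring

lemma isCommU2_of_trace_eq {s : F} (hs : s ≠ 0) (hA : ∀ c : F, A ≠ c • 1) (hdet : A.det = 1)
    (htr : A.trace = 2 + s ^ 2) : IsCommU2 A := by
  have hM : ∀ c : F, !![1 + s + s ^ 2, -s ^ 2; s, 1 - s] ≠ c • 1 :=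
    fun c h => hs (by simpa using congr_fun₂ h 1 0)
  obtain ⟨P, hP, rfl⟩ := exists_conj_of_trace_eq_of_det_eq hA hM
    (by rw [htr, trace_fin_two_of]; ring) (by rw [hdet, det_fin_two_of]; ring)
  exact (isCommU2_model hs).conj hP

end FinTwo

lemma exists_ne_ne_ne {α : Type*} (hα : 4 ≤ Cardinal.mk α) (x y z : α) :
    ∃ w : α, w ≠ x ∧ w ≠ y ∧ w ≠ z := by
  classical
  by_contra! h
  have hsub : (Set.univ : Set α) ⊆ (({x, y, z} : Finset α) : Set α) := fun w _ => by
    simpa [or_iff_not_imp_left] using h w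
  have : (4 : Cardinal) ≤ 3 := calc
    4 ≤ Cardinal.mk α := hα
    _ = Cardinal.mk (Set.univ : Set α) := Cardinal.mk_univ.symm
    _ ≤ Cardinal.mk (({x, y, z} : Finset α) : Set α) := Cardinal.mk_le_mk_of_subset hsub
    _ ≤ 3 := by
      rw [Finset.coe_sort_coe, Cardinal.mk_coe_finset]
      exact_mod_cast Finset.card_le_three
  norm_num at this

section Params

variable (hF : 4 ≤ Cardinal.mk F)
include hF

lemma exists_ne_zero_sq_ne (c : F) : ∃ e : F, e ≠ 0 ∧ e ^ 2 ≠ c := by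
  by_cases hc : IsSquare c
  · obtain ⟨f, rfl⟩ := hc
    obtain ⟨e, he0, hef, henf⟩ := exists_ne_ne_ne hF 0 f (-f)
    refine ⟨e, he0, fun h => ?_⟩
    rcases sq_eq_sq_iff_eq_or_eq_neg.mp (h.trans (sq f).symm) with h' | h'
    exacts [hef h', henf h']
  · exact ⟨1, one_ne_zero, fun h => hc ⟨1, by rw [← h]; ring⟩⟩

lemma exists_ne_zero_sq_ne_sq_ne {c d : F} (hcd : IsSquare c → IsSquare d → c = d) :
    ∃ e : F, e ≠ 0 ∧ e ^ 2 ≠ c ∧ e ^ 2 ≠ d := by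
  by_cases hc : IsSquare c
  · by_cases hd : IsSquare d
    · obtain ⟨e, he0, he⟩ := exists_ne_zero_sq_ne hF c
      exact ⟨e, he0, he, hcd hc hd ▸ he⟩
    · obtain ⟨e, he0, he⟩ := exists_ne_zero_sq_ne hF c
      exact ⟨e, he0, he, fun h => hd ⟨e, by rw [← h, sq]⟩⟩
  · obtain ⟨e, he0, he⟩ := exists_ne_zero_sq_ne hF d
    exact ⟨e, he0, fun h => hc ⟨e, by rw [← h, sq]⟩, he⟩

lemma exists_trace_params_of_two_eq_zero (h2 : (2 : F) = 0) (t : F) :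
    ∃ a s σ : F, a ≠ 0 ∧ s ≠ 0 ∧ σ ≠ 0 ∧ σ ^ 2 + 4 = a * (2 + s ^ 2 + t - a) := by
  obtain ⟨s, hs, hst⟩ := exists_ne_zero_sq_ne hF t
  obtain ⟨m, hm0, hm1, -⟩ := exists_ne_ne_ne hF 0 1 1
  have hst' : s ^ 2 + t ≠ 0 := fun h => hst (by linear_combination h - t * h2)
  have hm1' : (m + 1) ^ 2 ≠ 0 := pow_ne_zero 2 fun h => hm1 (by linear_combination h - h2)
  set a := (s ^ 2 + t) / (m + 1) ^ 2
  have ha0 : a ≠ 0 := div_ne_zero hst' hm1'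
  have ha' : (m + 1) ^ 2 * a = s ^ 2 + t := mul_div_cancel₀ _ hm1'
  -- in characteristic 2 the equation reads `σ ^ 2 = a * ((m + 1) ^ 2 * a - a) = (a * m) ^ 2`
  refine ⟨a, s, a * m, ha0, hs, mul_ne_zero ha0 hm0, ?_⟩
  linear_combination (-a) * ha' +
    (a ^ 2 * m ^ 2 + a ^ 2 * m + a ^ 2 + 2 - a - a * s ^ 2 - a * t) * h2

lemma exists_trace_params_of_sq_eq_neg_four (h2 : (2 : F) ≠ 0) {x : F} (hx : x ^ 2 = -4)
    (t : F) : ∃ a s σ : F, a ≠ 0 ∧ s ≠ 0 ∧ σ ≠ 0 ∧ σ ^ 2 + 4 = a * (2 + s ^ 2 + t - a) := by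
  have hx0 : x ≠ 0 := by
    rintro rfl
    exact h2 (mul_self_eq_zero.mp (by linear_combination hx))
  obtain ⟨s, hs, hst⟩ := exists_ne_zero_sq_ne hF (-2 - t)
  exact ⟨2 + s ^ 2 + t, s, x, fun h => hst (by linear_combination h), hs, hx0,
    by linear_combination hx⟩

lemma exists_trace_params_of_forall_sq_ne_neg_four (h2 : (2 : F) ≠ 0)
    (h4 : ∀ x : F, x ^ 2 ≠ -4) (t : F) :
    ∃ a s σ : F, a ≠ 0 ∧ s ≠ 0 ∧ σ ≠ 0 ∧ σ ^ 2 + 4 = a * (2 + s ^ 2 + t - a) := by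
  have hsq : IsSquare (t - 3) → IsSquare (-(t - 3)) → t - 3 = -(t - 3) := by
    rintro ⟨f, hf⟩ ⟨g, hg⟩
    by_cases hf0 : f = 0
    · rw [hf, hf0, mul_zero, neg_zero]
    · refine absurd ?_ (h4 (2 * g / f))
      field_simp
      linear_combination (-4) * hf - 4 * hg
  -- with `a = 1` the equation reads `(s - σ) * (s + σ) = 3 - t`; take `s - σ = -e`
  obtain ⟨e, he0, hec, hed⟩ := exists_ne_zero_sq_ne_sq_ne hF hsq
  have h2e : 2 * e ≠ 0 := mul_ne_zero h2 he0
  refine ⟨1, (t - 3 - e ^ 2) / (2 * e), (e ^ 2 + (t - 3)) / (2 * e), one_ne_zero,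
    div_ne_zero (fun h => hec (by linear_combination -h)) h2e,
    div_ne_zero (fun h => hed (by linear_combination h)) h2e, ?_⟩
  field_simp
  ring

/-- The equation makes the factors of `companion_eq_mul` with `β = 2 + s ^ 2` have traces
`2 + s ^ 2` and `2 + σ ^ 2`. -/
lemma exists_trace_params (t : F) :
    ∃ a s σ : F, a ≠ 0 ∧ s ≠ 0 ∧ σ ≠ 0 ∧ σ ^ 2 + 4 = a * (2 + s ^ 2 + t - a) := by
  by_cases h2 : (2 : F) = 0
  · exact exists_trace_params_of_two_eq_zero hF h2 t
  by_cases h4 : ∃ x : F, x ^ 2 = -4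
  · obtain ⟨x, hx⟩ := h4
    exact exists_trace_params_of_sq_eq_neg_four hF h2 hx t
  · exact exists_trace_params_of_forall_sq_ne_neg_four hF h2 (fun x hx => h4 ⟨x, hx⟩) t

end Params

/-- The first factor has trace `β`, the second one trace `a * (β + t - a) - 2`, both have
determinant `1`. -/
lemma companion_eq_mul (a β t : F) :
    !![0, -1; 1, t] = !![a, 1; a * (β - a) - 1, β - a] *
      !![-1, -(β - a) - t; a, a * (β - a) - 1 + a * t] := by
  ext i j
  fin_cases i <;> fin_cases j <;> simp [mul_apply] <;> ring

lemma exists_isCommU2_mul_eq_companion (hF : 4 ≤ Cardinal.mk F) (t : F) :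
    ∃ B C : Matrix (Fin 2) (Fin 2) F, IsCommU2 B ∧ IsCommU2 C ∧ !![0, -1; 1, t] = B * C := by
  obtain ⟨a, s, σ, ha, hs, hσ, h⟩ := exists_trace_params hF t
  refine ⟨_, _, ?_, ?_, companion_eq_mul a (2 + s ^ 2) t⟩
  · refine isCommU2_of_trace_eq hs (fun c hc => by simpa using congr_fun₂ hc 0 1) ?_ ?_
    · rw [det_fin_two_of]; ring
    · rw [trace_fin_two_of]; ring
  · refine isCommU2_of_trace_eq hσ (fun c hc => ha (by simpa using congr_fun₂ hc 1 0)) ?_ ?_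
    · rw [det_fin_two_of]; ring
    · rw [trace_fin_two_of]; linear_combination -h

theorem stmt10 {F : Type*} [Field F] (hF : 4 ≤ Cardinal.mk F)
    (A : Matrix (Fin 2) (Fin 2) F) (hA : A.det = 1) (hns : ∀ c : F, A ≠ c • 1) :
    IsProdCommU2 2 A := by
  obtain ⟨P, hP, hPA⟩ := exists_conj_companion hns
  obtain ⟨B, C, hB, hC, hBC⟩ := exists_isCommU2_mul_eq_companion hF A.trace
  rw [hPA, hA, hBC, ← conj_mul_conj hP]
  exact isProdCommU2_two_mul (hB.conj hP) (hC.conj hP)
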